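/- Let p₁, …, p_k be prime numbers, r₁, …, r_k positive integers with k ≥ 1, and R = (Z/p₁^{r₁}) × ⋯ × (Z/p_k^{r_k}). Then χ(complement of Γ(R)) = ω(complement of Γ(R)). -/

import Mathlib

/-- Beck's zero-divisor graph `Γ₀(R)`: vertices are all elements of `R`, and two
distinct vertices `x`, `y` are adjacent iff `x * y = 0`. -/
def gammaZero (R : Type*) [CommRing R] : SimpleGraph R where
  Adj x y := x ≠ y ∧ x * y = 0
  symm := ⟨fun x y ⟨h1, h2⟩ => ⟨h1.symm, by rwa [mul_comm]⟩⟩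
  loopless := ⟨fun x ⟨h1, _⟩ => h1 rfl⟩

/-- The set `Z(R) \ {0}` of nonzero zero-divisors of `R`. -/
def zdStar (R : Type*) [CommRing R] : Set R :=
  {x | x ≠ 0 ∧ ∃ y, y ≠ 0 ∧ x * y = 0}

/-- The Anderson–Livingston zero-divisor graph `Γ(R)`: vertices are the nonzero
zero-divisors of `R`, and two distinct vertices `x`, `y` are adjacent iff `x * y = 0`.
It is the subgraph of `Γ₀(R)` induced on `Z(R) \ {0}`. -/
def gammaGraph (R : Type*) [CommRing R] : SimpleGraph (zdStar R) :=
  (gammaZero R).induce (zdStar R)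

/-- The clique number of a graph, as an extended natural number: the least upper
bound of the sizes of (finite) cliques in `G`. -/
noncomputable def cliqueNumE {V : Type*} (G : SimpleGraph V) : ℕ∞ :=
  ⨆ (s : Finset V) (_ : G.IsClique (s : Set V)), (s.card : ℕ∞)

/-!
An element of `R = ∏ ZMod (pᵢ ^ rᵢ)` has a valuation vector `a ≤ r`, and `x * y = 0` iff
`r ≤ a + b`; in particular any two elements of complementary classes `a` and `r - a` multiply
to zero. The class of `a` has `∏ φ (pᵢ ^ (rᵢ - aᵢ))` elements, antitone in `a`. Order the
classes by decreasing size, with a tie-break making the order strictly monotone, and call `a`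
preferred when it comes no later than `r - a`. Two preferred classes are never complementary
unless they are the same self-complementary class, so the preferred classes, keeping only the
vertex `p ^ a` of each self-complementary class `a`, form a clique `K` of the complement of
`Γ(R)`. Colouring every vertex of `K` by itself, a self-complementary class by its kept vertex,
and injecting each remaining class into its larger complementary class gives a proper colouring
by `K`, so `χ ≤ |K| ≤ ω ≤ χ`.
-/

open Finset Function OrderDual
open scoped Nat

namespace ZMod

/-- The `p`-adic valuation of `x.val`, except that `pValuation p e 0 = e`. -/
def pValuation (p e : ℕ) (x : ZMod (p ^ e)) : ℕ :=
  if x = 0 then e else x.val.factorization p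

variable {p e : ℕ}

@[simp]
lemma pValuation_zero : pValuation p e 0 = e := if_pos rfl

lemma pValuation_of_ne_zero {x : ZMod (p ^ e)} (hx : x ≠ 0) :
    pValuation p e x = x.val.factorization p :=
  if_neg hx

lemma pow_dvd_val_iff_le_pValuation (hp : p.Prime) {x : ZMod (p ^ e)} {t : ℕ} (ht : t ≤ e) :
    p ^ t ∣ x.val ↔ t ≤ pValuation p e x := by
  rcases eq_or_ne x 0 with rfl | hx
  · simp [ht]
  · rw [pValuation_of_ne_zero hx, hp.pow_dvd_iff_le_factorization ((val_ne_zero x).2 hx)]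

lemma eq_zero_of_le_pValuation (hp : p.Prime) {x : ZMod (p ^ e)} (h : e ≤ pValuation p e x) :
    x = 0 := by
  have : NeZero (p ^ e) := ⟨pow_ne_zero e hp.ne_zero⟩
  rw [← val_eq_zero]
  exact Nat.eq_zero_of_dvd_of_lt ((pow_dvd_val_iff_le_pValuation hp le_rfl).2 h) (val_lt x)

lemma pValuation_le (hp : p.Prime) (x : ZMod (p ^ e)) : pValuation p e x ≤ e := by
  by_contra! h
  obtain rfl := eq_zero_of_le_pValuation hp h.le
  simp at h

lemma pValuation_eq_self_iff (hp : p.Prime) {x : ZMod (p ^ e)} : pValuation p e x = e ↔ x = 0 :=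
  ⟨fun h => eq_zero_of_le_pValuation hp h.ge, fun h => h ▸ pValuation_zero⟩

lemma mul_eq_zero_iff_le_pValuation_add (hp : p.Prime) (x y : ZMod (p ^ e)) :
    x * y = 0 ↔ e ≤ pValuation p e x + pValuation p e y := by
  have : NeZero (p ^ e) := ⟨pow_ne_zero e hp.ne_zero⟩
  rcases eq_or_ne x 0 with rfl | hx
  · simp
  rcases eq_or_ne y 0 with rfl | hy
  · simp
  have hx' := (val_ne_zero x).2 hx
  have hy' := (val_ne_zero y).2 hy
  have hxy : x * y = ((x.val * y.val : ℕ) : ZMod (p ^ e)) := by simp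
  rw [hxy, natCast_eq_zero_iff, hp.pow_dvd_iff_le_factorization (mul_ne_zero hx' hy'),
    Nat.factorization_mul hx' hy', pValuation_of_ne_zero hx, pValuation_of_ne_zero hy]
  rfl

lemma pValuation_natCast_pow (hp : p.Prime) {t : ℕ} (ht : t ≤ e) :
    pValuation p e ((p ^ t : ℕ) : ZMod (p ^ e)) = t := by
  rcases ht.eq_or_lt with rfl | hlt
  · simp
  have hval : ((p ^ t : ℕ) : ZMod (p ^ e)).val = p ^ t :=
    val_cast_of_lt (Nat.pow_lt_pow_right hp.one_lt hlt)
  have hne : ((p ^ t : ℕ) : ZMod (p ^ e)) ≠ 0 := by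
    rw [← val_ne_zero, hval]
    exact (pow_pos hp.pos t).ne'
  rw [pValuation_of_ne_zero hne, hval, hp.factorization_pow, Finsupp.single_eq_same]

variable [NeZero (p ^ e)]

lemma card_filter_le_pValuation (hp : p.Prime) {t : ℕ} (ht : t ≤ e) :
    #{x : ZMod (p ^ e) | t ≤ pValuation p e x} = p ^ (e - t) := by
  have hpow : p ^ t * p ^ (e - t) = p ^ e := by rw [← pow_add, Nat.add_sub_cancel' ht]
  have hlt {j : ℕ} (hj : j < p ^ (e - t)) : p ^ t * j < p ^ e :=
    hpow ▸ Nat.mul_lt_mul_of_pos_left hj (pow_pos hp.pos t)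
  rw [← card_range (p ^ (e - t))]
  refine card_bij' (fun x _ => x.val / p ^ t) (fun j _ => ((p ^ t * j : ℕ) : ZMod (p ^ e)))
    (fun x _ => ?_) (fun j hj => ?_) (fun x hx => ?_) (fun j hj => ?_)
  · exact mem_range.2 (Nat.div_lt_of_lt_mul ((val_lt x).trans_eq hpow.symm))
  · rw [mem_filter_univ, ← pow_dvd_val_iff_le_pValuation hp ht,
      val_cast_of_lt (hlt (mem_range.1 hj))]
    exact dvd_mul_right _ _
  · rw [Nat.mul_div_cancel' ((pow_dvd_val_iff_le_pValuation hp ht).2 ((mem_filter_univ x).1 hx)),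
      natCast_zmod_val]
  · rw [val_cast_of_lt (hlt (mem_range.1 hj)), Nat.mul_div_cancel_left _ (pow_pos hp.pos t)]

lemma card_filter_pValuation_eq (hp : p.Prime) {t : ℕ} (ht : t ≤ e) :
    #{x : ZMod (p ^ e) | pValuation p e x = t} = φ (p ^ (e - t)) := by
  rcases ht.eq_or_lt with rfl | hlt
  · simp [pValuation_eq_self_iff hp, filter_eq']
  obtain ⟨u, hu⟩ : ∃ u, e - t = u + 1 := ⟨e - t - 1, by omega⟩
  have hsplit : #{x : ZMod (p ^ e) | t ≤ pValuation p e x} =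
      #{x : ZMod (p ^ e) | pValuation p e x = t} + #{x | t + 1 ≤ pValuation p e x} := by
    rw [← card_union_of_disjoint (disjoint_filter.2 fun x _ h => by omega)]
    congr 1
    ext x
    simp only [mem_filter, mem_union, mem_univ, true_and]
    omega
  rw [card_filter_le_pValuation hp ht, card_filter_le_pValuation hp hlt, hu,
    show e - (t + 1) = u by omega, pow_succ] at hsplit
  rw [hu, Nat.totient_prime_pow_succ hp, Nat.mul_sub_one]
  omega

end ZMod

section ValuationVector

variable {ι : Type*} {p r : ι → ℕ}

abbrev PrimePowProd (p r : ι → ℕ) := ∀ i, ZMod (p i ^ r i)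

def valVec (x : PrimePowProd p r) : ι → ℕ := fun i => ZMod.pValuation (p i) (r i) (x i)

def powVec (p r a : ι → ℕ) : PrimePowProd p r :=
  fun i => ((p i ^ a i : ℕ) : ZMod (p i ^ r i))

variable (hp : ∀ i, (p i).Prime)
include hp

lemma valVec_le (x : PrimePowProd p r) : valVec x ≤ r :=
  fun i => ZMod.pValuation_le (hp i) (x i)

lemma eq_zero_iff_valVec_eq (x : PrimePowProd p r) : x = 0 ↔ valVec x = r := by
  simp only [funext_iff]
  exact forall_congr' fun i => (ZMod.pValuation_eq_self_iff (hp i)).symm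

lemma mul_eq_zero_iff_le_valVec_add (x y : PrimePowProd p r) :
    x * y = 0 ↔ r ≤ valVec x + valVec y := by
  rw [funext_iff, Pi.le_def]
  exact forall_congr' fun i => ZMod.mul_eq_zero_iff_le_pValuation_add (hp i) (x i) (y i)

lemma valVec_powVec {a : ι → ℕ} (ha : a ≤ r) : valVec (powVec p r a) = a :=
  funext fun i => ZMod.pValuation_natCast_pow (hp i) (ha i)

lemma exists_ne_zero_mul_eq_zero_iff (x : PrimePowProd p r) :
    (∃ y, y ≠ 0 ∧ x * y = 0) ↔ valVec x ≠ 0 := by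
  constructor
  · rintro ⟨y, hy, hxy⟩ hx
    rw [mul_eq_zero_iff_le_valVec_add hp, hx, zero_add] at hxy
    exact hy ((eq_zero_iff_valVec_eq hp y).2 (le_antisymm (valVec_le hp y) hxy))
  · intro hx
    have hle := valVec_le hp x
    refine ⟨powVec p r (r - valVec x), ?_, ?_⟩
    · rw [Ne, eq_zero_iff_valVec_eq hp, valVec_powVec hp tsub_le_self]
      rwa [tsub_eq_iff_eq_add_of_le hle, left_eq_add]
    · rw [mul_eq_zero_iff_le_valVec_add hp, valVec_powVec hp tsub_le_self]
      exact le_add_tsub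

lemma mem_zdStar_iff_valVec (x : PrimePowProd p r) :
    x ∈ zdStar (PrimePowProd p r) ↔ valVec x ≠ 0 ∧ valVec x ≠ r := by
  change x ≠ 0 ∧ (∃ y, y ≠ 0 ∧ x * y = 0) ↔ _
  rw [exists_ne_zero_mul_eq_zero_iff hp, Ne, eq_zero_iff_valVec_eq hp, and_comm]

lemma mem_zdStar_of_valVec_eq {x y : PrimePowProd p r} (hx : x ∈ zdStar (PrimePowProd p r))
    (h : valVec y = valVec x) : y ∈ zdStar (PrimePowProd p r) := by
  rw [mem_zdStar_iff_valVec hp] at hx ⊢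
  rwa [h]

lemma mem_zdStar_of_valVec_eq_tsub {x y : PrimePowProd p r}
    (hx : x ∈ zdStar (PrimePowProd p r)) (h : valVec y = r - valVec x) :
    y ∈ zdStar (PrimePowProd p r) := by
  refine ⟨fun hy => ?_, x, hx.1, ?_⟩
  · rw [eq_zero_iff_valVec_eq hp, h, tsub_eq_iff_eq_add_of_le (valVec_le hp x), left_eq_add] at hy
    exact ((mem_zdStar_iff_valVec hp x).1 hx).1 hy
  · rw [mul_eq_zero_iff_le_valVec_add hp, h, add_comm]
    exact le_add_tsub

end ValuationVector

section ValuationClass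

variable {ι : Type*} [Fintype ι] {p r : ι → ℕ}

def classSize (p r a : ι → ℕ) : ℕ := ∏ i, φ (p i ^ (r i - a i))

lemma card_valVec_eq [DecidableEq ι] [∀ i, NeZero (p i ^ r i)] (hp : ∀ i, (p i).Prime)
    {a : ι → ℕ} (ha : a ≤ r) :
    Fintype.card {x : PrimePowProd p r // valVec x = a} = classSize p r a := by
  have e : {x : PrimePowProd p r // valVec x = a} ≃
      ∀ i, {w : ZMod (p i ^ r i) // ZMod.pValuation (p i) (r i) w = a i} :=
    (Equiv.subtypeEquivRight fun x => funext_iff).trans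
      (Equiv.subtypePiEquivPi (p := fun i w => ZMod.pValuation (p i) (r i) w = a i))
  rw [Fintype.card_congr e, Fintype.card_pi]
  refine prod_congr rfl fun i _ => ?_
  rw [Fintype.card_subtype]
  exact ZMod.card_filter_pValuation_eq (hp i) (ha i)

lemma classSize_antitone (hp : ∀ i, (p i).Prime) : Antitone (classSize p r) := fun _ _ hab =>
  prod_le_prod' fun i _ => Nat.le_of_dvd (Nat.totient_pos.2 (pow_pos (hp i).pos _))
    (Nat.totient_dvd_of_dvd (pow_dvd_pow _ (Nat.sub_le_sub_left (hab i) _)))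

/-- Larger classes come first, so that of `a` and `r - a` the preferred one is the larger; the
lexicographic tie-break makes the key strictly monotone. -/
def classKey (p r a : ι → ℕ) : ℕᵒᵈ ×ₗ Lex (ι → ℕ) :=
  toLex (toDual (classSize p r a), toLex a)

lemma classKey_injective : Injective (classKey p r) := fun _ _ h =>
  congrArg (fun k : ℕᵒᵈ ×ₗ Lex (ι → ℕ) => ofLex (ofLex k).2) h

variable [LinearOrder ι]

def IsPreferred (p r a : ι → ℕ) : Prop := classKey p r a ≤ classKey p r (r - a)

lemma classKey_strictMono (hp : ∀ i, (p i).Prime) : StrictMono (classKey p r) := fun _ _ hab =>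
  Prod.Lex.toLex_strictMono
    (Prod.mk_lt_mk_of_le_of_lt (classSize_antitone hp hab.le) (Pi.toLex_strictMono hab))

lemma classSize_le_of_classKey_lt {a b : ι → ℕ} (h : classKey p r a < classKey p r b) :
    classSize p r b ≤ classSize p r a := by
  rcases Prod.Lex.lt_iff.1 h with h | ⟨h, -⟩
  · exact (toDual_lt_toDual.1 h).le
  · exact (toDual_inj.1 h).ge

lemma IsPreferred.eq_of_le_add (hp : ∀ i, (p i).Prime) {a b : ι → ℕ} (ha : IsPreferred p r a)
    (hb : IsPreferred p r b) (hab : r ≤ a + b) : a = b ∧ r - a = a := by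
  have hmono := (classKey_strictMono (p := p) (r := r) hp).monotone
  have h₁ : classKey p r (r - a) ≤ classKey p r b := hmono (tsub_le_iff_left.2 hab)
  have h₂ : classKey p r (r - b) ≤ classKey p r a := hmono (tsub_le_iff_right.2 hab)
  exact ⟨classKey_injective (le_antisymm (ha.trans h₁) (hb.trans h₂)),
    classKey_injective (le_antisymm (h₁.trans (hb.trans h₂)) ha)⟩

end ValuationClass

section Graph

lemma compl_gammaGraph_adj {R : Type*} [CommRing R] {x y : zdStar R} :
    (gammaGraph R)ᶜ.Adj x y ↔ x ≠ y ∧ (x : R) * y ≠ 0 := by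
  simp only [SimpleGraph.compl_adj, gammaGraph, gammaZero, SimpleGraph.comap_adj,
    Function.Embedding.subtype_apply, ne_eq, Subtype.coe_inj, not_and]
  tauto

lemma cliqueNumE_le_chromaticNumber {V : Type*} (G : SimpleGraph V) :
    cliqueNumE G ≤ G.chromaticNumber :=
  iSup₂_le fun _ hs => hs.card_le_chromaticNumber

lemma chromaticNumber_eq_cliqueNumE_of_isClique_of_colorable {V : Type*} {G : SimpleGraph V}
    {K : Finset V} (hK : G.IsClique (K : Set V)) (hG : G.Colorable #K) :
    G.chromaticNumber = cliqueNumE G :=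
  le_antisymm (hG.chromaticNumber_le.trans
      (le_iSup₂ (f := fun (s : Finset V) (_ : G.IsClique (s : Set V)) => (#s : ℕ∞)) K hK))
    (cliqueNumE_le_chromaticNumber G)

end Graph

section PrimePowerProduct

open Set

variable {ι : Type*} [Fintype ι] [LinearOrder ι] {p r : ι → ℕ}

def vertexClass (p r a : ι → ℕ) : Set (zdStar (PrimePowProd p r)) := {x | valVec x.1 = a}

def preferredClique (p r : ι → ℕ) : Set (zdStar (PrimePowProd p r)) :=
  {x | IsPreferred p r (valVec x.1) ∧
    (r - valVec x.1 = valVec x.1 → x.1 = powVec p r (valVec x.1))}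

variable (hp : ∀ i, (p i).Prime)
include hp

lemma card_vertexClass [∀ i, NeZero (p i ^ r i)] {a : ι → ℕ} (ha : a ≤ r)
    (hmem : ∀ y : PrimePowProd p r, valVec y = a → y ∈ zdStar (PrimePowProd p r)) :
    Nat.card (vertexClass p r a) = classSize p r a := by
  classical
  refine (Nat.card_congr (Equiv.subtypeSubtypeEquivSubtype (q := fun y => valVec y = a)
    fun {y} => hmem y)).trans ?_
  rw [Nat.card_eq_fintype_card, card_valVec_eq hp ha]

lemma exists_injOn_vertexClass [∀ i, NeZero (p i ^ r i)] {a : ι → ℕ}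
    (ha : ¬IsPreferred p r a) :
    ∃ f : zdStar (PrimePowProd p r) → zdStar (PrimePowProd p r),
      MapsTo f (vertexClass p r a) (vertexClass p r (r - a)) ∧ InjOn f (vertexClass p r a) := by
  rcases (vertexClass p r a).eq_empty_or_nonempty with h | ⟨x₀, rfl⟩
  · exact ⟨id, h ▸ mapsTo_empty _ _, h ▸ injOn_empty _⟩
  have hcard : Nat.card (vertexClass p r (valVec x₀.1)) ≤
      Nat.card (vertexClass p r (r - valVec x₀.1)) := by
    rw [card_vertexClass hp (valVec_le hp _) fun y hy => mem_zdStar_of_valVec_eq hp x₀.2 hy,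
      card_vertexClass hp tsub_le_self fun y hy => mem_zdStar_of_valVec_eq_tsub hp x₀.2 hy]
    exact classSize_le_of_classKey_lt (not_le.1 ha)
  classical
  rw [Nat.card_eq_fintype_card, Nat.card_eq_fintype_card] at hcard
  obtain ⟨e⟩ := Function.Embedding.nonempty_of_card_le hcard
  refine ⟨fun x => if hx : x ∈ vertexClass p r (valVec x₀.1) then e ⟨x, hx⟩ else x,
    fun x hx => ?_, fun x hx y hy hxy => ?_⟩
  · simp only [dif_pos hx]
    exact (e _).2
  · simp only [dif_pos hx, dif_pos hy] at hxy
    exact congrArg Subtype.val (e.injective (Subtype.ext hxy))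

lemma isClique_preferredClique :
    (gammaGraph (PrimePowProd p r))ᶜ.IsClique (preferredClique p r) := by
  intro x hx y hy hne
  refine compl_gammaGraph_adj.2 ⟨hne, fun hxy => hne ?_⟩
  obtain ⟨hv, hc⟩ := hx.1.eq_of_le_add hp hy.1 ((mul_eq_zero_iff_le_valVec_add hp _ _).1 hxy)
  exact Subtype.ext ((hx.2 hc).trans (hv ▸ (hy.2 (hv ▸ hc)).symm))

def classPowVertex (x : zdStar (PrimePowProd p r)) : zdStar (PrimePowProd p r) :=
  ⟨powVec p r (valVec x.1),
    mem_zdStar_of_valVec_eq hp x.2 (valVec_powVec hp (valVec_le hp _))⟩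

open scoped Classical in
noncomputable def colour
    (f : (ι → ℕ) → zdStar (PrimePowProd p r) → zdStar (PrimePowProd p r))
    (x : zdStar (PrimePowProd p r)) : zdStar (PrimePowProd p r) :=
  if r - valVec x.1 = valVec x.1 then classPowVertex hp x
  else if IsPreferred p r (valVec x.1) then x
  else f (valVec x.1) x

variable {f : (ι → ℕ) → zdStar (PrimePowProd p r) → zdStar (PrimePowProd p r)}
  (hf : ∀ a, ¬IsPreferred p r a →
    MapsTo (f a) (vertexClass p r a) (vertexClass p r (r - a)) ∧ InjOn (f a) (vertexClass p r a))
include hf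

lemma valVec_colour (x : zdStar (PrimePowProd p r)) :
    valVec (colour hp f x).1 = valVec x.1 ∨
      valVec (colour hp f x).1 = r - valVec x.1 := by
  unfold colour
  split_ifs with hc hpref
  · exact Or.inl (valVec_powVec hp (valVec_le hp _))
  · exact Or.inl rfl
  · exact Or.inr ((hf _ hpref).1 rfl)

lemma colour_mem_preferredClique (x : zdStar (PrimePowProd p r)) :
    colour hp f x ∈ preferredClique p r := by
  have hle := valVec_le hp (x : PrimePowProd p r)
  unfold colour
  split_ifs with hc hpref
  · have hv : valVec (classPowVertex hp x).1 = valVec x.1 :=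
      valVec_powVec hp hle
    refine ⟨?_, fun _ => ?_⟩
    · rw [IsPreferred, hv, hc]
    · rw [hv]; rfl
  · exact ⟨hpref, fun h => absurd h hc⟩
  · have hv : valVec (f _ x).1 = r - valVec x.1 :=
      (hf _ hpref).1 rfl
    refine ⟨?_, fun h => ?_⟩
    · rw [IsPreferred, hv, tsub_tsub_cancel_of_le hle]
      exact (not_le.1 hpref).le
    · rw [hv, tsub_tsub_cancel_of_le hle] at h
      exact absurd h.symm hc

lemma valVec_eq_of_colour_eq {x y : zdStar (PrimePowProd p r)}
    (hxy : x.1 * y.1 ≠ 0) (h : colour hp f x = colour hp f y) :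
    valVec x.1 = valVec y.1 := by
  have hx := valVec_le hp (x : PrimePowProd p r)
  have hy := valVec_le hp (y : PrimePowProd p r)
  rw [Ne, mul_eq_zero_iff_le_valVec_add hp] at hxy
  rcases valVec_colour hp hf x with hcx | hcx <;> rcases valVec_colour hp hf y with hcy | hcy <;>
    rw [h, hcy] at hcx
  · exact hcx.symm
  · exact absurd (tsub_le_iff_right.1 hcx.le) hxy
  · exact absurd (tsub_le_iff_left.1 hcx.ge) hxy
  · exact ((tsub_right_inj hy hx).1 hcx).symm

lemma colour_ne_of_adj {x y : zdStar (PrimePowProd p r)}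
    (hadj : (gammaGraph (PrimePowProd p r))ᶜ.Adj x y) : colour hp f x ≠ colour hp f y := by
  obtain ⟨hne, hxy⟩ := compl_gammaGraph_adj.1 hadj
  intro h
  have hv := valVec_eq_of_colour_eq hp hf hxy h
  unfold colour at h
  rw [hv] at h
  split_ifs at h with hc hpref
  · rw [Ne, mul_eq_zero_iff_le_valVec_add hp, hv] at hxy
    exact hxy (tsub_le_iff_left.1 hc.le)
  · exact hne h
  · exact hne ((hf _ hpref).2 hv rfl h)

end PrimePowerProduct

lemma exists_isClique_colorable_compl_gammaGraph {ι : Type*} [Fintype ι] [LinearOrder ι]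
    {p r : ι → ℕ} [∀ i, NeZero (p i ^ r i)] (hp : ∀ i, (p i).Prime) :
    ∃ K : Finset (zdStar (PrimePowProd p r)),
      (gammaGraph (PrimePowProd p r))ᶜ.IsClique (K : Set (zdStar (PrimePowProd p r))) ∧
        (gammaGraph (PrimePowProd p r))ᶜ.Colorable #K := by
  classical
  have hpair (a : ι → ℕ) : ∃ g : zdStar (PrimePowProd p r) → zdStar (PrimePowProd p r),
      ¬IsPreferred p r a → Set.MapsTo g (vertexClass p r a) (vertexClass p r (r - a)) ∧
        Set.InjOn g (vertexClass p r a) := by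
    by_cases ha : IsPreferred p r a
    · exact ⟨id, fun h => (h ha).elim⟩
    · obtain ⟨g, hg⟩ := exists_injOn_vertexClass hp ha
      exact ⟨g, fun _ => hg⟩
  choose f hf using hpair
  refine ⟨(preferredClique p r).toFinset, by simpa using isClique_preferredClique hp, ?_⟩
  rw [Set.toFinset_card]
  exact (SimpleGraph.Coloring.mk (fun x => ⟨colour hp f x, colour_mem_preferredClique hp hf x⟩)
    fun hadj h => colour_ne_of_adj hp hf hadj (congrArg Subtype.val h)).colorable

theorem stmt17_general (k : ℕ) (p r : Fin k → ℕ)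
    (hp : ∀ i, (p i).Prime) :
    ((gammaGraph (∀ i, ZMod (p i ^ r i)))ᶜ).chromaticNumber =
      cliqueNumE ((gammaGraph (∀ i, ZMod (p i ^ r i)))ᶜ) := by
  have : ∀ i, NeZero (p i ^ r i) := fun i => ⟨pow_ne_zero _ (hp i).ne_zero⟩
  obtain ⟨K, hK, hcol⟩ := exists_isClique_colorable_compl_gammaGraph (r := r) hp
  exact chromaticNumber_eq_cliqueNumE_of_isClique_of_colorable hK hcol

theorem stmt17 (k : ℕ) (hk : 1 ≤ k) (p r : Fin k → ℕ)
    (hp : ∀ i, (p i).Prime) (hr : ∀ i, 0 < r i) :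
    ((gammaGraph (∀ i, ZMod (p i ^ r i)))ᶜ).chromaticNumber =
      cliqueNumE ((gammaGraph (∀ i, ZMod (p i ^ r i)))ᶜ) :=
  stmt17_general k p r hp
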